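/- Let ℓ ≥ 4 and suppose the fixed set F = F_E ∪ F_N contains no cycle of length 2ℓ, and that there exist at least two distinct F-fixed realisations of the bipartite degree sequence S. Then every F-fixed realisation G of S admits a j-swap for some even j with 4 ≤ j ≤ 2ℓ − 2: there exists an F-fixed realisation G' of S obtained from G by such a j-swap. -/

import Mathlib

/-- `E ⊆ V × U` is a realisation of the bipartite degree sequence `(a, b)`:
vertex `i` of the first part has degree `a i`, vertex `j` of the second part degree `b j`. -/
def IsRealisation {n n' : ℕ} (a : Fin n → ℕ) (b : Fin n' → ℕ)
    (E : Finset (Fin n × Fin n')) : Prop :=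
  (∀ i : Fin n, (E.filter fun p => p.1 = i).card = a i) ∧
  (∀ j : Fin n', (E.filter fun p => p.2 = j).card = b j)

/-- An `F`-fixed realisation: a realisation containing all fixed edges `FE`
and none of the fixed non-edges `FN`. -/
def IsFFixedRealisation {n n' : ℕ} (a : Fin n → ℕ) (b : Fin n' → ℕ)
    (FE FN E : Finset (Fin n × Fin n')) : Prop :=
  IsRealisation a b E ∧ FE ⊆ E ∧ FN ∩ E = ∅

/-- `F ⊆ V × U` contains a cycle of length `2 * m`: there are distinct
`x 0, …, x (m-1)` in `V` and distinct `y 0, …, y (m-1)` in `U` with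
`(x s, y s) ∈ F` and `(x (s+1 mod m), y s) ∈ F` for all `s < m`. -/
def HasCycleOfLength {n n' : ℕ} (F : Finset (Fin n × Fin n')) (m : ℕ) : Prop :=
  ∃ (x : ℕ → Fin n) (y : ℕ → Fin n'),
    (∀ s < m, ∀ t < m, x s = x t → s = t) ∧
    (∀ s < m, ∀ t < m, y s = y t → s = t) ∧
    (∀ s < m, (x s, y s) ∈ F ∧ (x ((s + 1) % m), y s) ∈ F)

/-- `G'` is obtained from `G` by a `j`-swap (`j = 2 * m` even, `m ≥ 2`): the
symmetric difference is a vertex-disjoint alternating cycle of length `j`, i.e.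
there are distinct `v 0, …, v (m-1)` and distinct `u 0, …, u (m-1)` with
`G \ G' = {(v s, u s) : s < m}` and `G' \ G = {(v (s+1 mod m), u s) : s < m}`. -/
def IsJSwap {n n' : ℕ} (G G' : Finset (Fin n × Fin n')) (j : ℕ) : Prop :=
  ∃ m : ℕ, j = 2 * m ∧ 2 ≤ m ∧
    ∃ (v : ℕ → Fin n) (u : ℕ → Fin n'),
      (∀ s < m, ∀ t < m, v s = v t → s = t) ∧
      (∀ s < m, ∀ t < m, u s = u t → s = t) ∧
      G \ G' = (Finset.range m).image (fun s => (v s, u s)) ∧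
      G' \ G = (Finset.range m).image (fun s => (v ((s + 1) % m), u s))

/-!
Two distinct `F`-fixed realisations `G ≠ H` have the same degrees, so at every vertex `G \ H`
and `H \ G` are balanced, and following them alternately closes up into an alternating cycle of
edges of `G` outside `FE` and non-edges of `G` outside `FN`; swapping along it gives an `F`-fixed
realisation. Take such a cycle `v 0, u 0, v 1, …` of minimal length `2 m`. If `m ≤ ℓ - 1` this is
the required swap. Otherwise every chord `(v s, u (s + k))` with `1 ≤ k ≤ m - 2` lies in `F`,
since a chord outside `F` would short-cut the cycle into a shorter swappable one; and these
chords contain a cycle of length `2 ℓ`.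
-/

open Finset Function

section PeriodicIndex

variable {γ : Type*} {f : ℕ → γ} {m : ℕ}

theorem eq_of_apply_eq_of_lt (hf : ∀ s t, f s = f t ↔ s ≡ t [MOD m]) {s t : ℕ}
    (hs : s < m) (ht : t < m) (h : f s = f t) : s = t :=
  ((hf s t).1 h).eq_of_lt_of_lt hs ht

theorem apply_mod_eq (hf : ∀ s t, f s = f t ↔ s ≡ t [MOD m]) (s : ℕ) : f (s % m) = f s :=
  (hf _ _).2 (Nat.mod_modEq s m)

theorem apply_mod_add_eq_iff (hf : ∀ s t, f s = f t ↔ s ≡ t [MOD m]) {L : ℕ} (hL : 0 < L)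
    (hLm : L ≤ m) (c s t : ℕ) : f (s % L + c) = f (t % L + c) ↔ s ≡ t [MOD L] := by
  rw [hf, Nat.ModEq.add_iff_right rfl]
  exact ⟨fun h => h.eq_of_lt_of_lt ((s.mod_lt hL).trans_le hLm) ((t.mod_lt hL).trans_le hLm),
    fun h => h ▸ rfl⟩

end PeriodicIndex

section AltCycle

variable {α β : Type*} {E₁ E₂ : Set (α × β)} {m : ℕ} {v : ℕ → α} {u : ℕ → β}

/-- The vertices of the cycle are indexed by all of `ℕ`, with exact period `m`; this avoids the
`% m` of `HasCycleOfLength` and `IsJSwap`. -/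
structure IsAltCycle (E₁ E₂ : Set (α × β)) (m : ℕ) (v : ℕ → α) (u : ℕ → β) : Prop where
  v_eq_iff : ∀ s t, v s = v t ↔ s ≡ t [MOD m]
  u_eq_iff : ∀ s t, u s = u t ↔ s ≡ t [MOD m]
  mem₁ : ∀ s, (v s, u s) ∈ E₁
  mem₂ : ∀ s, (v (s + 1), u s) ∈ E₂

theorem IsAltCycle.injOn_pair (h : IsAltCycle E₁ E₂ m v u) (w : ℕ → α) (S : Finset ℕ)
    (hS : S ⊆ range m) : Set.InjOn (fun s => (w s, u s)) S := fun _ hs _ ht hst =>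
  eq_of_apply_eq_of_lt h.u_eq_iff (mem_range.1 (hS hs)) (mem_range.1 (hS ht))
    (congrArg Prod.snd hst)

theorem IsAltCycle.mono {E₁' E₂' : Set (α × β)} (h : IsAltCycle E₁ E₂ m v u)
    (h₁ : E₁ ⊆ E₁') (h₂ : E₂ ⊆ E₂') : IsAltCycle E₁' E₂' m v u :=
  ⟨h.v_eq_iff, h.u_eq_iff, fun s => h₁ (h.mem₁ s), fun s => h₂ (h.mem₂ s)⟩

theorem IsAltCycle.shift (h : IsAltCycle E₁ E₂ m v u) (c : ℕ) :
    IsAltCycle E₁ E₂ m (fun s => v (s + c)) (fun s => u (s + c)) where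
  v_eq_iff s t := (h.v_eq_iff _ _).trans (Nat.ModEq.add_iff_right rfl)
  u_eq_iff s t := (h.u_eq_iff _ _).trans (Nat.ModEq.add_iff_right rfl)
  mem₁ s := h.mem₁ (s + c)
  mem₂ s := by simpa only [add_right_comm] using h.mem₂ (s + c)

theorem IsAltCycle.close₂ (h : IsAltCycle E₁ E₂ m v u) {k : ℕ} (hkm : k + 1 ≤ m)
    (hchord : (v 0, u k) ∈ E₂) :
    IsAltCycle E₁ E₂ (k + 1) (fun s => v (s % (k + 1))) (fun s => u (s % (k + 1))) where
  v_eq_iff s t := by simpa using apply_mod_add_eq_iff h.v_eq_iff k.add_one_pos hkm 0 s t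
  u_eq_iff s t := by simpa using apply_mod_add_eq_iff h.u_eq_iff k.add_one_pos hkm 0 s t
  mem₁ s := h.mem₁ _
  mem₂ s := by
    rw [← Nat.mod_add_mod]
    rcases Nat.lt_or_ge (s % (k + 1) + 1) (k + 1) with hs | hs
    · rw [Nat.mod_eq_of_lt hs]
      exact h.mem₂ _
    · rw [show s % (k + 1) = k by have := s.mod_lt k.add_one_pos; omega, Nat.mod_self]
      exact hchord

/-- The cycle `u 0, v 1, u 1, …, u (L - 1), v L`, closed by the chord `(v L, u 0)`. -/
theorem IsAltCycle.close₁ (h : IsAltCycle E₁ E₂ m v u) {L : ℕ} (hL : 0 < L) (hLm : L ≤ m)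
    (hchord : (v L, u 0) ∈ E₁) :
    IsAltCycle E₁ E₂ L (fun s => v (s % L + 1)) (fun s => u ((s + 1) % L)) where
  v_eq_iff s t := apply_mod_add_eq_iff h.v_eq_iff hL hLm 1 s t
  u_eq_iff s t := by
    simpa [Nat.ModEq.add_iff_right rfl] using
      apply_mod_add_eq_iff h.u_eq_iff hL hLm 0 (s + 1) (t + 1)
  mem₁ s := by
    rw [← Nat.mod_add_mod]
    rcases Nat.lt_or_ge (s % L + 1) L with hs | hs
    · rw [Nat.mod_eq_of_lt hs]
      exact h.mem₁ _
    · rw [show s % L + 1 = L by have := s.mod_lt hL; omega, Nat.mod_self]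
      exact hchord
  mem₂ s := h.mem₂ _

/-- A chord in `E₁ ∪ E₂` would close a shorter alternating cycle. -/
theorem IsAltCycle.chord_notMem (h : IsAltCycle E₁ E₂ m v u)
    (hmin : ∀ m' < m, 2 ≤ m' → ∀ v' u', ¬ IsAltCycle E₁ E₂ m' v' u')
    {k : ℕ} (hk : 1 ≤ k) (hkm : k + 2 ≤ m) (s : ℕ) : (v s, u (s + k)) ∉ E₁ ∪ E₂ := by
  rintro (h₁ | h₂)
  · refine hmin (m - k) (by omega) (by omega) _ _
      ((h.shift (s + k)).close₁ (by omega) (by omega) ?_)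
    have hv : v (m - k + (s + k)) = v s :=
      (h.v_eq_iff _ _).2 (by rw [show m - k + (s + k) = m + s by omega]; exact Nat.add_modEq_left)
    simpa [hv] using h₁
  · exact hmin (k + 1) (by omega) (by omega) _ _
      ((h.shift s).close₂ (by omega) (by simpa [add_comm] using h₂))

theorem exists_isAltCycle_minimal (h : ∃ m, 2 ≤ m ∧ ∃ v u, IsAltCycle E₁ E₂ m v u) :
    ∃ m, 2 ≤ m ∧ ∃ v u, IsAltCycle E₁ E₂ m v u ∧
      ∀ m' < m, 2 ≤ m' → ∀ v' u', ¬ IsAltCycle E₁ E₂ m' v' u' := by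
  classical
  obtain ⟨hm, v, u, hc⟩ := Nat.find_spec h
  exact ⟨_, hm, v, u, hc, fun m' hm' h2 v' u' hc' => Nat.find_min h hm' ⟨h2, v', u', hc'⟩⟩

theorem exists_iterate_mem_periodicPts [Finite α] (f : α → α) (x : α) :
    ∃ i, f^[i] x ∈ periodicPts f := by
  obtain ⟨i, j, hij, h⟩ := Finite.exists_ne_map_eq_of_infinite fun i => f^[i] x
  wlog hlt : i < j generalizing i j
  · exact this j i hij.symm h.symm (by omega)
  refine ⟨i, j - i, by omega, ?_⟩
  rw [IsPeriodicPt, IsFixedPt, ← iterate_add_apply, Nat.sub_add_cancel hlt.le]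
  exact h.symm

theorem iterate_eq_iterate_iff_modEq {f : α → α} {x : α} (hx : x ∈ periodicPts f) (s t : ℕ) :
    f^[s] x = f^[t] x ↔ s ≡ t [MOD minimalPeriod f x] := by
  have hpos := minimalPeriod_pos_of_mem_periodicPts hx
  rw [← iterate_mod_minimalPeriod_eq (n := s), ← iterate_mod_minimalPeriod_eq (n := t),
    iterate_eq_iterate_iff_of_lt_minimalPeriod (s.mod_lt hpos) (t.mod_lt hpos)]
  rfl

/-- Alternately following `E₁` and `E₂`, with the next vertex a function of the current one,
runs into a periodic orbit; since the step from `u s` to `v (s + 1)` depends on `u s` alone, the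
`u`'s of that orbit are distinct as well. -/
theorem exists_isAltCycle [Finite α] (hdisj : Disjoint E₁ E₂) (hne : E₁.Nonempty)
    (h₁₂ : ∀ p ∈ E₁, ∃ w, (w, p.2) ∈ E₂) (h₂₁ : ∀ p ∈ E₂, ∃ z, (p.1, z) ∈ E₁) :
    ∃ m, 2 ≤ m ∧ ∃ v u, IsAltCycle E₁ E₂ m v u := by
  obtain ⟨⟨x₀, z₀⟩, hx₀⟩ := hne
  have : Nonempty α := ⟨x₀⟩
  have : Nonempty β := ⟨z₀⟩
  let row : α → β := fun w => Classical.epsilon fun z => (w, z) ∈ E₁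
  let col : β → α := fun z => Classical.epsilon fun w => (w, z) ∈ E₂
  have hrow {w z} (hz : (w, z) ∈ E₁) : (w, row w) ∈ E₁ :=
    Classical.epsilon_spec (p := fun z => (w, z) ∈ E₁) ⟨z, hz⟩
  have hcol {w z} (hw : (w, z) ∈ E₂) : (col z, z) ∈ E₂ :=
    Classical.epsilon_spec (p := fun w => (w, z) ∈ E₂) ⟨w, hw⟩
  let S : Set α := {w | ∃ z, (w, z) ∈ E₁}
  have hS : Set.MapsTo (col ∘ row) S S := fun w ⟨_, hz⟩ => by
    obtain ⟨w', hw'⟩ := h₁₂ _ (hrow hz)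
    exact h₂₁ _ (hcol hw')
  obtain ⟨i, hi⟩ := exists_iterate_mem_periodicPts (col ∘ row) x₀
  set y := (col ∘ row)^[i] x₀
  have hyS : ∀ s, (col ∘ row)^[s] y ∈ S := fun s => hS.iterate s (hS.iterate i ⟨z₀, hx₀⟩)
  have hv := iterate_eq_iterate_iff_modEq hi
  have hc : IsAltCycle E₁ E₂ (minimalPeriod (col ∘ row) y)
      (fun s => (col ∘ row)^[s] y) (fun s => row ((col ∘ row)^[s] y)) := by
    refine ⟨hv, fun s t => ⟨fun h => ?_, fun h => by rw [(hv s t).2 h]⟩,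
      fun s => hrow (hyS s).choose_spec, fun s => ?_⟩
    · refine (Nat.ModEq.add_iff_right rfl).1 ((hv (s + 1) (t + 1)).1 ?_)
      simp only [iterate_succ_apply', comp_apply, h]
    · obtain ⟨w, hw⟩ := h₁₂ _ (hrow (hyS s).choose_spec)
      simpa only [iterate_succ_apply', comp_apply] using hcol hw
  refine ⟨_, ?_, _, _, hc⟩
  have hpos := minimalPeriod_pos_of_mem_periodicPts hi
  by_contra! h1
  have hv10 : (col ∘ row)^[1] y = (col ∘ row)^[0] y :=
    (hv 1 0).2 (by rw [show minimalPeriod (col ∘ row) y = 1 by omega]; rfl)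
  exact hdisj.ne_of_mem (hc.mem₁ 0) (hc.mem₂ 0) (by rw [hv10])

end AltCycle

section FilterCard

variable {γ : Type*}

theorem exists_mem_filter_of_card_eq {s t : Finset γ} {p : γ → Prop} [DecidablePred p]
    {x : γ} (hx : x ∈ s) (hpx : p x) (h : #(s.filter p) = #(t.filter p)) : ∃ y ∈ t, p y := by
  obtain ⟨y, hy⟩ := card_pos.1 (h ▸ card_pos.2 ⟨x, mem_filter.2 ⟨hx, hpx⟩⟩)
  exact ⟨y, (mem_filter.1 hy).1, (mem_filter.1 hy).2⟩

variable [DecidableEq γ]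

theorem card_filter_sdiff_comm {s t : Finset γ} (p : γ → Prop) [DecidablePred p]
    (h : #(s.filter p) = #(t.filter p)) : #((s \ t).filter p) = #((t \ s).filter p) := by
  have filter_sdiff (s t : Finset γ) : (s \ t).filter p = s.filter p \ t.filter p := by
    ext; simp only [mem_filter, mem_sdiff]; tauto
  rw [filter_sdiff, filter_sdiff]
  exact card_sdiff_comm h

theorem card_filter_sdiff_union {G D A : Finset γ} (hD : D ⊆ G) (hA : Disjoint A G)
    (p : γ → Prop) [DecidablePred p] :
    #((G \ D ∪ A).filter p) + #(D.filter p) = #(G.filter p) + #(A.filter p) := by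
  have hGD : (G \ D).filter p = G.filter p \ D.filter p := by
    ext; simp only [mem_filter, mem_sdiff]; tauto
  rw [filter_union, card_union_of_disjoint, hGD, add_right_comm,
    card_sdiff_add_card_eq_card (filter_subset_filter p hD)]
  exact (hA.symm.mono_left sdiff_subset).mono (filter_subset _ _) (filter_subset _ _)

theorem card_filter_range_succ {f : ℕ → γ} {m : ℕ} (hf : f m = f 0) (x : γ) :
    #((range m).filter fun s => f (s + 1) = x) = #((range m).filter fun s => f s = x) := by
  have h₁ := sum_range_succ (fun s => if f s = x then 1 else 0) m
  have h₂ := sum_range_succ' (fun s => if f s = x then 1 else 0) m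
  simp only [card_filter]
  rw [hf] at h₁
  omega

end FilterCard

section AltCycleEdges

variable {α β : Type*} [DecidableEq α] [DecidableEq β] {E₁ E₂ : Set (α × β)} {m : ℕ}
  {v : ℕ → α} {u : ℕ → β}

theorem IsAltCycle.card_filter_fst (h : IsAltCycle E₁ E₂ m v u) (x : α) :
    #(((range m).image fun s => (v s, u s)).filter (·.1 = x)) =
      #(((range m).image fun s => (v (s + 1), u s)).filter (·.1 = x)) := by
  rw [filter_image, filter_image, card_image_of_injOn (h.injOn_pair _ _ (filter_subset _ _)),
    card_image_of_injOn (h.injOn_pair _ _ (filter_subset _ _))]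
  exact (card_filter_range_succ ((h.v_eq_iff _ _).2 (by simp [Nat.ModEq])) x).symm

theorem IsAltCycle.card_filter_snd (h : IsAltCycle E₁ E₂ m v u) (y : β) :
    #(((range m).image fun s => (v s, u s)).filter (·.2 = y)) =
      #(((range m).image fun s => (v (s + 1), u s)).filter (·.2 = y)) := by
  rw [filter_image, filter_image, card_image_of_injOn (h.injOn_pair _ _ (filter_subset _ _)),
    card_image_of_injOn (h.injOn_pair _ _ (filter_subset _ _))]

end AltCycleEdges

section FixedRealisation

variable {n n' : ℕ} {a : Fin n → ℕ} {b : Fin n' → ℕ} {FE FN G H : Finset (Fin n × Fin n')}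

theorem IsRealisation.sdiff_union {D A : Finset (Fin n × Fin n')} (hG : IsRealisation a b G)
    (hD : D ⊆ G) (hA : Disjoint A G)
    (hfst : ∀ i, #(D.filter (·.1 = i)) = #(A.filter (·.1 = i)))
    (hsnd : ∀ j, #(D.filter (·.2 = j)) = #(A.filter (·.2 = j))) :
    IsRealisation a b (G \ D ∪ A) := by
  refine ⟨fun i => ?_, fun j => ?_⟩
  · have := card_filter_sdiff_union hD hA (·.1 = i)
    have := hG.1 i
    have := hfst i
    omega
  · have := card_filter_sdiff_union hD hA (·.2 = j)
    have := hG.2 j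
    have := hsnd j
    omega

theorem exists_isAltCycle_of_ne (hG : IsFFixedRealisation a b FE FN G)
    (hH : IsFFixedRealisation a b FE FN H) (hne : G ≠ H) :
    ∃ m, 2 ≤ m ∧ ∃ v u, IsAltCycle {p | p ∈ G ∧ p ∉ FE} {p | p ∉ G ∧ p ∉ FN} m v u := by
  have hfst (i) : #((G \ H).filter (·.1 = i)) = #((H \ G).filter (·.1 = i)) :=
    card_filter_sdiff_comm _ ((hG.1.1 i).trans (hH.1.1 i).symm)
  have hsnd (j) : #((G \ H).filter (·.2 = j)) = #((H \ G).filter (·.2 = j)) :=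
    card_filter_sdiff_comm _ ((hG.1.2 j).trans (hH.1.2 j).symm)
  have h₂₁ : ∀ p ∈ (↑(H \ G) : Set (Fin n × Fin n')),
      ∃ z, (p.1, z) ∈ (↑(G \ H) : Set (Fin n × Fin n')) := by
    intro p hp
    obtain ⟨q, hq, hqp⟩ := exists_mem_filter_of_card_eq (p := (·.1 = p.1)) hp rfl (hfst p.1).symm
    exact ⟨q.2, by rwa [← hqp]⟩
  have h₁₂ : ∀ p ∈ (↑(G \ H) : Set (Fin n × Fin n')),
      ∃ w, (w, p.2) ∈ (↑(H \ G) : Set (Fin n × Fin n')) := by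
    intro p hp
    obtain ⟨q, hq, hqp⟩ := exists_mem_filter_of_card_eq (p := (·.2 = p.2)) hp rfl (hsnd p.2)
    exact ⟨q.1, by rwa [← hqp]⟩
  have hne' : (↑(G \ H) : Set (Fin n × Fin n')).Nonempty := by
    obtain ⟨p, hp⟩ := symmDiff_nonempty.2 hne
    rcases mem_union.1 (symmDiff_def G H ▸ hp) with hp | hp
    · exact ⟨p, hp⟩
    · obtain ⟨z, hz⟩ := h₂₁ p hp
      exact ⟨_, hz⟩
  obtain ⟨m, hm, v, u, hc⟩ := exists_isAltCycle (disjoint_coe.2 disjoint_sdiff_sdiff) hne' h₁₂ h₂₁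
  refine ⟨m, hm, v, u, hc.mono (fun p hp => ?_) (fun p hp => ?_)⟩
  · obtain ⟨hpG, hpH⟩ := mem_sdiff.1 hp
    exact ⟨hpG, fun hpFE => hpH (hH.2.1 hpFE)⟩
  · obtain ⟨hpH, hpG⟩ := mem_sdiff.1 hp
    exact ⟨hpG, fun hpFN => disjoint_left.1 (disjoint_iff_inter_eq_empty.2 hH.2.2) hpFN hpH⟩

theorem IsAltCycle.exists_isJSwap {m : ℕ} {v : ℕ → Fin n} {u : ℕ → Fin n'}
    (hG : IsFFixedRealisation a b FE FN G)
    (h : IsAltCycle {p | p ∈ G ∧ p ∉ FE} {p | p ∉ G ∧ p ∉ FN} m v u) (hm : 2 ≤ m) :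
    ∃ G', IsFFixedRealisation a b FE FN G' ∧ IsJSwap G G' (2 * m) := by
  set D := (range m).image fun s => (v s, u s)
  set A := (range m).image fun s => (v (s + 1), u s)
  have hD : ∀ p ∈ D, p ∈ G ∧ p ∉ FE := by
    simp only [D, mem_image, mem_range]
    rintro _ ⟨s, -, rfl⟩
    exact h.mem₁ s
  have hA : ∀ p ∈ A, p ∉ G ∧ p ∉ FN := by
    simp only [A, mem_image, mem_range]
    rintro _ ⟨s, -, rfl⟩
    exact h.mem₂ s
  have hAG : Disjoint A G := disjoint_left.2 fun p hp => (hA p hp).1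
  have hA' : A = (range m).image fun s => (v ((s + 1) % m), u s) := by
    refine image_congr fun s _ => ?_
    simp only [apply_mod_eq h.v_eq_iff]
  refine ⟨G \ D ∪ A, ⟨hG.1.sdiff_union (fun p hp => (hD p hp).1) hAG h.card_filter_fst
    h.card_filter_snd, ?_, ?_⟩, m, rfl, hm, v, u, ?_, ?_, ?_, ?_⟩
  · exact fun p hp => mem_union_left _ (mem_sdiff.2 ⟨hG.2.1 hp, fun hpD => (hD p hpD).2 hp⟩)
  · rw [← disjoint_iff_inter_eq_empty, disjoint_union_right]
    exact ⟨(disjoint_iff_inter_eq_empty.2 hG.2.2).mono_right sdiff_subset,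
      disjoint_right.2 fun p hp => (hA p hp).2⟩
  · exact fun s hs t ht => eq_of_apply_eq_of_lt h.v_eq_iff hs ht
  · exact fun s hs t ht => eq_of_apply_eq_of_lt h.u_eq_iff hs ht
  · ext p
    have := hD p
    have := hA p
    simp only [mem_sdiff, mem_union]
    tauto
  · ext p
    have := hA p
    simp only [← hA', mem_sdiff, mem_union]
    tauto

end FixedRealisation

/-- The cycle `v 0, u 2, v 1, u 3, …, v (ℓ - 1), u (M + 1) = u 1`: its chords have lengths `2`
and `1`, except `(v (ℓ - 1), u (M + 1))` of length `M + 2 - ℓ`. -/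
theorem hasCycleOfLength_of_chords {n n' : ℕ} {F : Finset (Fin n × Fin n')} {M ℓ : ℕ}
    {v : ℕ → Fin n} {u : ℕ → Fin n'} (hv : ∀ s t, v s = v t ↔ s ≡ t [MOD M])
    (hu : ∀ s t, u s = u t ↔ s ≡ t [MOD M])
    (hchord : ∀ s k, 1 ≤ k → k + 2 ≤ M → (v s, u (s + k)) ∈ F) (hℓ : 4 ≤ ℓ) (hℓM : ℓ ≤ M) :
    HasCycleOfLength F ℓ := by
  refine ⟨v, fun s => u ((s + 1) % ℓ + 1),
    fun s hs t ht => eq_of_apply_eq_of_lt hv (by omega) (by omega), fun s hs t ht hst => ?_,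
    fun s hs => ⟨?_, hchord _ 1 le_rfl (by omega)⟩⟩
  · have := (apply_mod_add_eq_iff hu (by omega) hℓM 1 (s + 1) (t + 1)).1 hst
    exact ((Nat.ModEq.add_iff_right rfl).1 this).eq_of_lt_of_lt hs ht
  · show (v s, u ((s + 1) % ℓ + 1)) ∈ F
    rcases Nat.lt_or_ge (s + 1) ℓ with hs' | hs'
    · rw [Nat.mod_eq_of_lt hs']
      exact hchord s 2 (by omega) (by omega)
    · have hu1 : u (0 + 1) = u (s + (M + 2 - ℓ)) := (hu _ _).2 (by
        rw [show s + (M + 2 - ℓ) = M + (0 + 1) by omega]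
        exact Nat.add_modEq_left.symm)
      rw [show s + 1 = ℓ by omega, Nat.mod_self, hu1]
      exact hchord _ _ (by omega) (by omega)

theorem stmt16_general {n n' : ℕ} (a : Fin n → ℕ) (b : Fin n' → ℕ)
    (ℓ : ℕ) (hℓ : 4 ≤ ℓ)
    (FE FN : Finset (Fin n × Fin n'))
    (hF : ¬ HasCycleOfLength (FE ∪ FN) ℓ)
    (htwo : ∃ E₁ E₂ : Finset (Fin n × Fin n'),
      IsFFixedRealisation a b FE FN E₁ ∧ IsFFixedRealisation a b FE FN E₂ ∧ E₁ ≠ E₂)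
    (G : Finset (Fin n × Fin n')) (hG : IsFFixedRealisation a b FE FN G) :
    ∃ (G' : Finset (Fin n × Fin n')) (j : ℕ),
      IsFFixedRealisation a b FE FN G' ∧ j ≤ 2 * ℓ - 2 ∧ IsJSwap G G' j := by
  obtain ⟨H, hH, hGH⟩ : ∃ H, IsFFixedRealisation a b FE FN H ∧ G ≠ H := by
    obtain ⟨E₁, E₂, h₁, h₂, h₁₂⟩ := htwo
    by_cases hG₁ : G = E₁
    · exact ⟨E₂, h₂, hG₁ ▸ h₁₂⟩
    · exact ⟨E₁, h₁, hG₁⟩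
  obtain ⟨m, hm, v, u, hc, hmin⟩ :=
    exists_isAltCycle_minimal (exists_isAltCycle_of_ne hG hH hGH)
  by_cases hmℓ : m + 1 ≤ ℓ
  · obtain ⟨G', hG', hswap⟩ := hc.exists_isJSwap hG hm
    exact ⟨G', 2 * m, hG', by omega, hswap⟩
  · refine absurd (hasCycleOfLength_of_chords hc.v_eq_iff hc.u_eq_iff
      (fun s k hk hkm => ?_) hℓ (by omega)) hF
    have := hc.chord_notMem hmin hk hkm s
    simp only [Set.mem_union, Set.mem_ofPred_eq, mem_union] at this ⊢
    tauto

/-- let `ℓ ≥ 4`, suppose `F = FE ∪ FN` contains no cycle of length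
`2ℓ`, and suppose there are at least two distinct `F`-fixed realisations of `S`.
Then every `F`-fixed realisation `G` admits a `j`-swap for some (even) `j` with
`4 ≤ j ≤ 2ℓ - 2`: there is an `F`-fixed realisation `G'` obtained from `G` by
such a `j`-swap. -/
theorem stmt16 {n n' : ℕ} (a : Fin n → ℕ) (b : Fin n' → ℕ)
    (ℓ : ℕ) (hℓ : 4 ≤ ℓ)
    (FE FN : Finset (Fin n × Fin n')) (hdisj : Disjoint FE FN)
    (hF : ¬ HasCycleOfLength (FE ∪ FN) ℓ)
    (htwo : ∃ E₁ E₂ : Finset (Fin n × Fin n'),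
      IsFFixedRealisation a b FE FN E₁ ∧ IsFFixedRealisation a b FE FN E₂ ∧ E₁ ≠ E₂)
    (G : Finset (Fin n × Fin n')) (hG : IsFFixedRealisation a b FE FN G) :
    ∃ (G' : Finset (Fin n × Fin n')) (j : ℕ),
      IsFFixedRealisation a b FE FN G' ∧ j ≤ 2 * ℓ - 2 ∧ IsJSwap G G' j :=
  stmt16_general a b ℓ hℓ FE FN hF htwo G hG
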